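/- arXiv:1809.05854 — 7 statements merged into one kernel-verified Lean document; each statement's English description precedes it below -/
import Mathlib

section
/- Let 0 < A < 1, 0 < M < 1, Q > 0, and consider the cubic polynomial d(u) = u^3 - (M+1-A)u^2 - (A(M+1) - Q - M)u + AM. Then d has exactly one negative real root. -/
/-- The cubic d(u) = u³ - (M+1-A)u² - (A(M+1)-Q-M)u + AM arising from the
equilibrium condition of the Holling–Tanner model has exactly one negative real root. -/
theorem cubic_unique_negative_root (A M Q : ℝ)
    (hA : 0 < A) (hA1 : A < 1) (hM : 0 < M) (hM1 : M < 1) (hQ : 0 < Q) :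
    ∃! u : ℝ, u < 0 ∧
      u ^ 3 - (M + 1 - A) * u ^ 2 - (A * (M + 1) - Q - M) * u + A * M = 0 := by
  set f : ℝ → ℝ := fun u =>
    u ^ 3 - (M + 1 - A) * u ^ 2 - (A * (M + 1) - Q - M) * u + A * M with hf
  have hcont : Continuous f := by fun_prop
  have hfA : f (-A) = -(Q * A) := by simp only [hf]; ring
  have hf0 : f 0 = A * M := by simp only [hf]; ring
  have hmem : (0 : ℝ) ∈ Set.Ioo (f (-A)) (f 0) := by
    rw [hfA, hf0]
    constructor <;> nlinarith
  have hsub : Set.Ioo (f (-A)) (f 0) ⊆ f '' Set.Ioo (-A) 0 :=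
    intermediate_value_Ioo (by linarith) hcont.continuousOn
  obtain ⟨u, hu, hfu⟩ := hsub hmem
  -- uniqueness helper
  have uniq : ∀ x y : ℝ, x < 0 → y < 0 → f x = 0 → f y = 0 → x = y := by
    intro x y hx hy hfx hfy
    by_contra hne
    have hxy : x - y ≠ 0 := sub_ne_zero.mpr hne
    simp only [hf] at hfx hfy
    have h2 : (x - y) * (x ^ 2 + x * y + y ^ 2 - (M + 1 - A) * (x + y)
        - (A * (M + 1) - Q - M)) = 0 := by linear_combination hfx - hfy
    have h3 : x ^ 2 + x * y + y ^ 2 - (M + 1 - A) * (x + y)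
        - (A * (M + 1) - Q - M) = 0 := by
      rcases mul_eq_zero.mp h2 with h | h
      · exact absurd h hxy
      · exact h
    have h4 : x * y * ((M + 1 - A) - x - y) = -(A * M) := by
      linear_combination hfx - x * h3
    have hxypos : 0 < x * y := mul_pos_of_neg_of_neg hx hy
    nlinarith [mul_pos hxypos (show (0:ℝ) < (M + 1 - A) - x - y by linarith)]
  refine ⟨u, ⟨hu.2, by simpa [hf] using hfu⟩, ?_⟩
  rintro v ⟨hv, hfv⟩
  exact uniq v u hv hu.2 (by simpa [hf] using hfv) hfu
end

section
/- Let 0 < A < 1, 0 < M < 1, H > 0 with H < A, and set Δ = (H+M+1-A)^2 - 4AM/H. If Δ > 0, then the two roots u₁ = ((H+M+1-A) - √Δ)/2 and u₂ = ((H+M+1-A) + √Δ)/2 of u^2 - (H+M+1-A)u + AM/H satisfy M < u₁ ≤ u₂ < 1. -/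
/-- When Δ > 0, the two roots u₁ ≤ u₂ of the quadratic equilibrium factor
satisfy M < u₁ ≤ u₂ < 1. -/
theorem roots_between_M_and_one (A M H : ℝ)
    (hA : 0 < A) (hA1 : A < 1) (hM : 0 < M) (hM1 : M < 1) (hH : 0 < H) (hHA : H < A)
    (hΔ : 0 < (H + M + 1 - A) ^ 2 - 4 * A * M / H) :
    M < ((H + M + 1 - A) - Real.sqrt ((H + M + 1 - A) ^ 2 - 4 * A * M / H)) / 2 ∧
    ((H + M + 1 - A) - Real.sqrt ((H + M + 1 - A) ^ 2 - 4 * A * M / H)) / 2 ≤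
      ((H + M + 1 - A) + Real.sqrt ((H + M + 1 - A) ^ 2 - 4 * A * M / H)) / 2 ∧
    ((H + M + 1 - A) + Real.sqrt ((H + M + 1 - A) ^ 2 - 4 * A * M / H)) / 2 < 1 := by
  set Δ : ℝ := (H + M + 1 - A) ^ 2 - 4 * A * M / H with hΔdef
  have hsnn : 0 ≤ Real.sqrt Δ := Real.sqrt_nonneg _
  have hdivnorm : 4 * A * M / H = 4 * (A * M / H) := by ring
  have hΔn : 0 < (H + M + 1 - A) ^ 2 - 4 * (A * M / H) := by
    have := hΔ; rw [hΔdef, hdivnorm] at this; exact this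
  have hMHA : M * H < A := by nlinarith
  have hdiv : M * M < A * M / H := by
    rw [lt_div_iff₀ hH]
    nlinarith [mul_lt_mul_of_pos_left hMHA hM]
  -- key inequality for M < u₁ : (S - M) * M < A*M/H
  have key1 : (H + M + 1 - A) * M - M * M < A * M / H := by
    rw [lt_div_iff₀ hH]
    nlinarith [mul_pos hM (sub_pos.mpr hHA), mul_pos (mul_pos hM hH) (sub_pos.mpr hHA)]
  -- key inequality for u₂ < 1 : H + M - A < A*M/H
  have key2 : H + M - A < A * M / H := by
    rw [lt_div_iff₀ hH]
    nlinarith [mul_pos (add_pos hH hM) (sub_pos.mpr hHA)]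
  -- S > 2M
  have hS2M : 0 < (H + M + 1 - A) - 2 * M := by
    by_contra hc
    push_neg at hc
    have h0 : 0 < H + M + 1 - A := by linarith
    have hb : (H + M + 1 - A) ^ 2 ≤ (2 * M) ^ 2 :=
      pow_le_pow_left₀ h0.le (by linarith) 2
    nlinarith [hdiv, hΔn, hb]
  -- √Δ < S - 2M
  have h1 : Real.sqrt Δ < (H + M + 1 - A) - 2 * M := by
    rw [show ((H + M + 1 - A) - 2 * M) = Real.sqrt (((H + M + 1 - A) - 2 * M) ^ 2) from
      (Real.sqrt_sq hS2M.le).symm]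
    apply Real.sqrt_lt_sqrt hΔ.le
    rw [hΔdef, hdivnorm]
    nlinarith [key1]
  -- 2 - S > 0
  have h2S : 0 < 2 - (H + M + 1 - A) := by linarith
  -- √Δ < 2 - S
  have h2 : Real.sqrt Δ < 2 - (H + M + 1 - A) := by
    rw [show (2 - (H + M + 1 - A)) = Real.sqrt ((2 - (H + M + 1 - A)) ^ 2) from
      (Real.sqrt_sq h2S.le).symm]
    apply Real.sqrt_lt_sqrt hΔ.le
    rw [hΔdef, hdivnorm]
    nlinarith [key2]
  refine ⟨by linarith, by linarith, by linarith⟩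
end

section
/- The blown-up system dx/dt = x(S(1-x)(A+xy) + x(M-xy)(xy-1)(A+xy) - Qx y), dy/dt = S(x-1)(xy+A)y, with A, M, Q, S > 0, has Jacobian at (0,0) equal to diag(AS, -AS); hence (0,0) is a hyperbolic saddle of the blown-up system. -/
/-! Both coordinate axes are invariant: the field has the form `(x g(x,y), y h(x,y))`, so its
Jacobian at the origin is `diag(g 0, h 0)`, and here `g 0 = A S`, `h 0 = -A S`. -/

section AxisInvariantField

variable {𝕜 : Type*} [NontriviallyNormedField 𝕜] {g h : 𝕜 × 𝕜 → 𝕜}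

theorem hasFDerivAt_fst_mul_prod_mul_snd_zero (hg : DifferentiableAt 𝕜 g 0)
    (hh : DifferentiableAt 𝕜 h 0) :
    HasFDerivAt (fun p : 𝕜 × 𝕜 => (p.1 * g p, h p * p.2))
      ((g 0 • ContinuousLinearMap.fst 𝕜 𝕜 𝕜).prod (h 0 • ContinuousLinearMap.snd 𝕜 𝕜 𝕜)) 0 := by
  have hx := (hasFDerivAt_fst (p := (0 : 𝕜 × 𝕜))).mul hg.hasFDerivAt
  have hy := hh.hasFDerivAt.mul (hasFDerivAt_snd (p := (0 : 𝕜 × 𝕜)))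
  refine (hx.prodMk hy).congr_fderiv ?_
  ext <;> simp

theorem fderiv_fst_mul_prod_mul_snd_zero_apply_one_zero (hg : DifferentiableAt 𝕜 g 0)
    (hh : DifferentiableAt 𝕜 h 0) :
    fderiv 𝕜 (fun p : 𝕜 × 𝕜 => (p.1 * g p, h p * p.2)) 0 (1, 0) = (g 0, 0) := by
  simp [(hasFDerivAt_fst_mul_prod_mul_snd_zero hg hh).fderiv]

theorem fderiv_fst_mul_prod_mul_snd_zero_apply_zero_one (hg : DifferentiableAt 𝕜 g 0)
    (hh : DifferentiableAt 𝕜 h 0) :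
    fderiv 𝕜 (fun p : 𝕜 × 𝕜 => (p.1 * g p, h p * p.2)) 0 (0, 1) = (0, h 0) := by
  simp [(hasFDerivAt_fst_mul_prod_mul_snd_zero hg hh).fderiv]

end AxisInvariantField

theorem blowup_origin_saddle_general (A M Q S : ℝ)
    (hA : 0 < A) (hS : 0 < S) :
    (fderiv ℝ (fun p : ℝ × ℝ =>
        (p.1 * (S * (1 - p.1) * (A + p.1 * p.2)
            + p.1 * (M - p.1 * p.2) * (p.1 * p.2 - 1) * (A + p.1 * p.2)
            - Q * p.1 * p.2),
         S * (p.1 - 1) * (p.1 * p.2 + A) * p.2)) (0, 0)) (1, 0) = (A * S, 0) ∧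
    (fderiv ℝ (fun p : ℝ × ℝ =>
        (p.1 * (S * (1 - p.1) * (A + p.1 * p.2)
            + p.1 * (M - p.1 * p.2) * (p.1 * p.2 - 1) * (A + p.1 * p.2)
            - Q * p.1 * p.2),
         S * (p.1 - 1) * (p.1 * p.2 + A) * p.2)) (0, 0)) (0, 1) = (0, -(A * S)) ∧
    0 < A * S ∧ -(A * S) < 0 := by
  set g : ℝ × ℝ → ℝ := fun p => S * (1 - p.1) * (A + p.1 * p.2)
    + p.1 * (M - p.1 * p.2) * (p.1 * p.2 - 1) * (A + p.1 * p.2) - Q * p.1 * p.2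
  set h : ℝ × ℝ → ℝ := fun p => S * (p.1 - 1) * (p.1 * p.2 + A)
  have hg : DifferentiableAt ℝ g 0 := by fun_prop
  have hh : DifferentiableAt ℝ h 0 := by fun_prop
  have hg0 : g 0 = A * S := by simp [g]; ring
  have hh0 : h 0 = -(A * S) := by simp [h]; ring
  have hAS : 0 < A * S := mul_pos hA hS
  refine ⟨?_, ?_, hAS, neg_neg_of_pos hAS⟩
  · rw [← hg0]; exact fderiv_fst_mul_prod_mul_snd_zero_apply_one_zero hg hh
  · rw [← hh0]; exact fderiv_fst_mul_prod_mul_snd_zero_apply_zero_one hg hh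

/-- The Jacobian of the blown-up system at (0,0) equals diag(AS, -AS); both
diagonal entries are nonzero with opposite signs, so (0,0) is a hyperbolic saddle. -/
theorem blowup_origin_saddle (A M Q S : ℝ)
    (hA : 0 < A) (hM : 0 < M) (hQ : 0 < Q) (hS : 0 < S) :
    (fderiv ℝ (fun p : ℝ × ℝ =>
        (p.1 * (S * (1 - p.1) * (A + p.1 * p.2)
            + p.1 * (M - p.1 * p.2) * (p.1 * p.2 - 1) * (A + p.1 * p.2)
            - Q * p.1 * p.2),
         S * (p.1 - 1) * (p.1 * p.2 + A) * p.2)) (0, 0)) (1, 0) = (A * S, 0) ∧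
    (fderiv ℝ (fun p : ℝ × ℝ =>
        (p.1 * (S * (1 - p.1) * (A + p.1 * p.2)
            + p.1 * (M - p.1 * p.2) * (p.1 * p.2 - 1) * (A + p.1 * p.2)
            - Q * p.1 * p.2),
         S * (p.1 - 1) * (p.1 * p.2 + A) * p.2)) (0, 0)) (0, 1) = (0, -(A * S)) ∧
    0 < A * S ∧ -(A * S) < 0 :=
  blowup_origin_saddle_general A M Q S hA hS
end

section
/- For the blown-up system dx/dt = x(S(1-x)(A+xy) + x(M-xy)(xy-1)(A+xy) - Qxy), dy/dt = S(x-1)(xy+A)y with A, M, Q, S > 0, the point (μ, 0) with μ = S/(S+M) is an equilibrium, and its Jacobian is upper triangular with eigenvalues -AS and -AMS/(M+S), both negative; hence (μ,0) is a hyperbolic attractor. -/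
/-!
On the invariant axis `y = 0` the blown-up field reduces to `(A x (S (1 - x) - M x), 0)`, whose
nonzero root is `μ = S / (S + M)`. Every term of the first component that involves `y` (in
particular every `Q`-term) is killed at `y = 0`, and the second component is divisible by `y`, so
the Jacobian at `(μ, 0)` is read off from two one-variable derivatives: along the axis,
`A (S - 2 (S + M) μ) = -A S`, and transversally, `A S (μ - 1) = -A M S / (M + S)`.
-/

section PartialDerivatives

variable {E : Type*} [NormedAddCommGroup E] [NormedSpace ℝ E]
  {f : ℝ × ℝ → E} {f' : ℝ × ℝ →L[ℝ] E} {x y : ℝ} {e : E}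

theorem HasFDerivAt.apply_one_zero_eq (hf : HasFDerivAt f f' (x, y))
    (h : HasDerivAt (fun t => f (t, y)) e x) : f' (1, 0) = e :=
  (hf.comp_hasDerivAt x ((hasDerivAt_id x).prodMk (hasDerivAt_const x y))).unique h

theorem HasFDerivAt.apply_zero_one_eq (hf : HasFDerivAt f f' (x, y))
    (h : HasDerivAt (fun t => f (x, t)) e y) : f' (0, 1) = e :=
  (hf.comp_hasDerivAt y ((hasDerivAt_const y x).prodMk (hasDerivAt_id y))).unique h

end PartialDerivatives

def blowupField (A M Q S : ℝ) (p : ℝ × ℝ) : ℝ × ℝ :=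
  (p.1 * (S * (1 - p.1) * (A + p.1 * p.2)
      + p.1 * (M - p.1 * p.2) * (p.1 * p.2 - 1) * (A + p.1 * p.2)
      - Q * p.1 * p.2),
   S * (p.1 - 1) * (p.1 * p.2 + A) * p.2)

namespace blowupField

variable (A M Q S : ℝ)

theorem differentiable : Differentiable ℝ (blowupField A M Q S) := by
  unfold blowupField; fun_prop

theorem apply_axis (x : ℝ) :
    blowupField A M Q S (x, 0) = (A * x * (S * (1 - x) - M * x), 0) := by
  simp only [blowupField, Prod.mk.injEq]; constructor <;> ring

theorem hasDerivAt_axis (x : ℝ) :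
    HasDerivAt (fun t => blowupField A M Q S (t, 0)) (A * (S - 2 * (S + M) * x), 0) x := by
  have hpoly : HasDerivAt (fun t => A * S * t - A * (S + M) * t ^ 2)
      (A * S * 1 - A * (S + M) * ((2 : ℕ) * x ^ (2 - 1))) x :=
    ((hasDerivAt_id x).const_mul (A * S)).sub ((hasDerivAt_pow 2 x).const_mul (A * (S + M)))
  convert hpoly.prodMk (hasDerivAt_const x (0 : ℝ)) using 1
  · funext t; rw [apply_axis]; congr 1; ring
  · congr 1; push_cast; ring

theorem hasDerivAt_snd_vertical (x : ℝ) :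
    HasDerivAt (fun t => (blowupField A M Q S (x, t)).2) (A * S * (x - 1)) 0 := by
  have hpoly : HasDerivAt (fun t => A * S * (x - 1) * t + S * (x - 1) * x * t ^ 2)
      (A * S * (x - 1) * 1 + S * (x - 1) * x * ((2 : ℕ) * 0 ^ (2 - 1))) 0 :=
    ((hasDerivAt_id 0).const_mul _).add ((hasDerivAt_pow 2 0).const_mul _)
  convert hpoly using 1
  · funext t; simp only [blowupField]; ring
  · simp

theorem fderiv_axis_apply_one_zero (x : ℝ) :
    fderiv ℝ (blowupField A M Q S) (x, 0) (1, 0) = (A * (S - 2 * (S + M) * x), 0) :=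
  ((differentiable A M Q S _).hasFDerivAt).apply_one_zero_eq (hasDerivAt_axis A M Q S x)

theorem fderiv_axis_apply_zero_one_snd (x : ℝ) :
    (fderiv ℝ (blowupField A M Q S) (x, 0) (0, 1)).2 = A * S * (x - 1) :=
  ((differentiable A M Q S _).hasFDerivAt.snd).apply_zero_one_eq
    (hasDerivAt_snd_vertical A M Q S x)

end blowupField

theorem blowup_mu_attractor_general (A M Q S : ℝ)
    (hA : 0 < A) (hM : 0 < M) (hS : 0 < S) :
    (fun p : ℝ × ℝ =>
        (p.1 * (S * (1 - p.1) * (A + p.1 * p.2)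
            + p.1 * (M - p.1 * p.2) * (p.1 * p.2 - 1) * (A + p.1 * p.2)
            - Q * p.1 * p.2),
         S * (p.1 - 1) * (p.1 * p.2 + A) * p.2)) (S / (S + M), 0) = (0, 0) ∧
    (fderiv ℝ (fun p : ℝ × ℝ =>
        (p.1 * (S * (1 - p.1) * (A + p.1 * p.2)
            + p.1 * (M - p.1 * p.2) * (p.1 * p.2 - 1) * (A + p.1 * p.2)
            - Q * p.1 * p.2),
         S * (p.1 - 1) * (p.1 * p.2 + A) * p.2)) (S / (S + M), 0)) (1, 0)
      = (-(A * S), 0) ∧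
    ((fderiv ℝ (fun p : ℝ × ℝ =>
        (p.1 * (S * (1 - p.1) * (A + p.1 * p.2)
            + p.1 * (M - p.1 * p.2) * (p.1 * p.2 - 1) * (A + p.1 * p.2)
            - Q * p.1 * p.2),
         S * (p.1 - 1) * (p.1 * p.2 + A) * p.2)) (S / (S + M), 0)) (0, 1)).2
      = -(A * M * S / (M + S)) ∧
    -(A * S) < 0 ∧ -(A * M * S / (M + S)) < 0 := by
  have hSM : S + M ≠ 0 := by positivity
  have hμ : S * (1 - S / (S + M)) = M * (S / (S + M)) := by field_simp; ring
  refine ⟨?_, ?_, ?_, neg_lt_zero.mpr (by positivity), neg_lt_zero.mpr (by positivity)⟩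
  · change blowupField A M Q S _ = _
    rw [blowupField.apply_axis, hμ, sub_self, mul_zero]
  · change fderiv ℝ (blowupField A M Q S) _ _ = _
    rw [blowupField.fderiv_axis_apply_one_zero]
    congr 1; field_simp; ring
  · change (fderiv ℝ (blowupField A M Q S) _ _).2 = _
    rw [blowupField.fderiv_axis_apply_zero_one_snd]
    field_simp; ring

/-- The point (μ,0), μ = S/(S+M), is an equilibrium of the blown-up system; its
Jacobian is upper triangular with negative eigenvalues -AS and -AMS/(M+S), so
(μ,0) is a hyperbolic attractor. -/
theorem blowup_mu_attractor (A M Q S : ℝ)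
    (hA : 0 < A) (hM : 0 < M) (hQ : 0 < Q) (hS : 0 < S) :
    (fun p : ℝ × ℝ =>
        (p.1 * (S * (1 - p.1) * (A + p.1 * p.2)
            + p.1 * (M - p.1 * p.2) * (p.1 * p.2 - 1) * (A + p.1 * p.2)
            - Q * p.1 * p.2),
         S * (p.1 - 1) * (p.1 * p.2 + A) * p.2)) (S / (S + M), 0) = (0, 0) ∧
    (fderiv ℝ (fun p : ℝ × ℝ =>
        (p.1 * (S * (1 - p.1) * (A + p.1 * p.2)
            + p.1 * (M - p.1 * p.2) * (p.1 * p.2 - 1) * (A + p.1 * p.2)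
            - Q * p.1 * p.2),
         S * (p.1 - 1) * (p.1 * p.2 + A) * p.2)) (S / (S + M), 0)) (1, 0)
      = (-(A * S), 0) ∧
    ((fderiv ℝ (fun p : ℝ × ℝ =>
        (p.1 * (S * (1 - p.1) * (A + p.1 * p.2)
            + p.1 * (M - p.1 * p.2) * (p.1 * p.2 - 1) * (A + p.1 * p.2)
            - Q * p.1 * p.2),
         S * (p.1 - 1) * (p.1 * p.2 + A) * p.2)) (S / (S + M), 0)) (0, 1)).2
      = -(A * M * S / (M + S)) ∧
    -(A * S) < 0 ∧ -(A * M * S / (M + S)) < 0 :=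
  blowup_mu_attractor_general A M Q S hA hM hS
end

section
/- Let u₁ = ((H+M+1-A) - √Δ)/2 with Δ = (H+M+1-A)^2 - 4AM/H > 0, where 0 < A < 1, 0 < M < 1, 0 < H < A. Then -H - M - 1 + A + 2u₁ = -√Δ < 0; consequently det J(P₁) = S u₁³ (A+u₁)(H+u₁)(-H-M-1+A+2u₁) < 0 for any S > 0, so P₁ = (u₁,u₁) is a saddle point. -/
/-- For the smaller root u₁, the quantity -H-M-1+A+2u₁ equals -√Δ < 0, hence
det J(P₁) < 0 and P₁ is a saddle point. -/
theorem P1_saddle (A M H S : ℝ)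
    (hA : 0 < A) (hA1 : A < 1) (hM : 0 < M) (hM1 : M < 1) (hH : 0 < H) (hHA : H < A)
    (hΔ : 0 < (H + M + 1 - A) ^ 2 - 4 * A * M / H) (hS : 0 < S) :
    -H - M - 1 + A + 2 * (((H + M + 1 - A)
        - Real.sqrt ((H + M + 1 - A) ^ 2 - 4 * A * M / H)) / 2)
      = -Real.sqrt ((H + M + 1 - A) ^ 2 - 4 * A * M / H) ∧
    -H - M - 1 + A + 2 * (((H + M + 1 - A)
        - Real.sqrt ((H + M + 1 - A) ^ 2 - 4 * A * M / H)) / 2) < 0 ∧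
    S * (((H + M + 1 - A) - Real.sqrt ((H + M + 1 - A) ^ 2 - 4 * A * M / H)) / 2) ^ 3
      * (A + ((H + M + 1 - A) - Real.sqrt ((H + M + 1 - A) ^ 2 - 4 * A * M / H)) / 2)
      * (H + ((H + M + 1 - A) - Real.sqrt ((H + M + 1 - A) ^ 2 - 4 * A * M / H)) / 2)
      * (-H - M - 1 + A + 2 * (((H + M + 1 - A)
          - Real.sqrt ((H + M + 1 - A) ^ 2 - 4 * A * M / H)) / 2)) < 0 := by
  set B : ℝ := H + M + 1 - A with hB
  set Δ : ℝ := B ^ 2 - 4 * A * M / H with hD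
  have hBpos : 0 < B := by simp only [hB]; linarith
  have hsq : Real.sqrt Δ ^ 2 = Δ := Real.sq_sqrt hΔ.le
  have hspos : 0 < Real.sqrt Δ := Real.sqrt_pos.mpr hΔ
  have hΔlt : Δ < B ^ 2 := by
    have : 0 < 4 * A * M / H := by positivity
    simp only [hD]; linarith
  have hsltB : Real.sqrt Δ < B := by
    nlinarith [hsq, hspos]
  have heq : -H - M - 1 + A + 2 * ((B - Real.sqrt Δ) / 2) = -Real.sqrt Δ := by
    simp only [hB]; ring
  have hu : 0 < (B - Real.sqrt Δ) / 2 := by linarith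
  refine ⟨heq, by rw [heq]; linarith, ?_⟩
  rw [heq]
  have h1 : 0 < ((B - Real.sqrt Δ) / 2) ^ 3 := by positivity
  have h2 : 0 < A + (B - Real.sqrt Δ) / 2 := by linarith
  have h3 : 0 < H + (B - Real.sqrt Δ) / 2 := by linarith
  have : 0 < S * ((B - Real.sqrt Δ) / 2) ^ 3 * (A + (B - Real.sqrt Δ) / 2)
      * (H + (B - Real.sqrt Δ) / 2) := by positivity
  exact mul_neg_of_pos_of_neg this (by linarith)
end

section
/- Let E = (H+M+1-A)/2 with Δ = (H+M+1-A)^2 - 4AM/H = 0, Q = (H+1)(H+M)(A-H)/H, 0 < H < A < 1, 0 < M < 1. Then f(E) = E g'(E)/(A+E) = Q(H+M+1-A)/(H+M+1+A), where g(u) = (u+A)(1-u)(u-M) and g'(u) = (1-u)(u-M) + (u+A)(1-u) - (u+A)(u-M). -/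
/-- At the degenerate equilibrium E, the critical value f(E) = E g'(E)/(A+E)
equals Q(H+M+1-A)/(H+M+1+A). -/
theorem critical_S_at_E (A M H Q : ℝ)
    (hH : 0 < H) (hHA : H < A) (hA1 : A < 1) (hM : 0 < M) (hM1 : M < 1)
    (hΔ : (H + M + 1 - A) ^ 2 - 4 * A * M / H = 0)
    (hQ : Q = (H + 1) * (H + M) * (A - H) / H) :
    ((H + M + 1 - A) / 2)
        * ((1 - (H + M + 1 - A) / 2) * ((H + M + 1 - A) / 2 - M)
          + ((H + M + 1 - A) / 2 + A) * (1 - (H + M + 1 - A) / 2)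
          - ((H + M + 1 - A) / 2 + A) * ((H + M + 1 - A) / 2 - M))
        / (A + (H + M + 1 - A) / 2)
      = Q * (H + M + 1 - A) / (H + M + 1 + A) := by
  have hH0 : H ≠ 0 := ne_of_gt hH
  have hden : H + M + 1 + A ≠ 0 := by nlinarith
  have hden2 : A + (H + M + 1 - A) / 2 ≠ 0 := by nlinarith
  have h : H * (H + M + 1 - A) ^ 2 - 4 * A * M = 0 := by
    field_simp at hΔ; linarith
  set E : ℝ := (H + M + 1 - A) / 2 with hE
  have key : (1 - E) * (E - M) + (E + A) * (1 - E) - (E + A) * (E - M) = Q := by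
    rw [hQ, eq_div_iff hH0]
    linear_combination (1 / 4 : ℝ) * h
  rw [key, div_eq_div_iff hden2 hden, hE]
  ring
end

section
/- Let F(u,v;Q) = ((u+A)(1-u)(u-M) - Qv, u - v), E = (H+M+1-A)/2 with Δ = 0 and Q, H, A, M as in the Holling–Tanner equilibrium setup. With W = (-S(H+M+1+A)/(Q(H+M+1-A)), 1), the derivative of F with respect to Q at (E,E) is (-E, 0), and W · F_Q(E,E;Q) = S(H+M+1+A)/(2Q) ≠ 0. -/
/-- Sotomayor transversality: F_Q(E,E;Q) = (-E, 0) and W · F_Q(E,E;Q)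
= S(H+M+1+A)/(2Q) ≠ 0. -/
theorem sotomayor_transversality (A M H Q S : ℝ)
    (hH : 0 < H) (hHA : H < A) (hA1 : A < 1) (hM : 0 < M) (hM1 : M < 1) (hS : 0 < S)
    (hΔ : (H + M + 1 - A) ^ 2 - 4 * A * M / H = 0)
    (hQ : Q = (H + 1) * (H + M) * (A - H) / H) :
    deriv (fun q : ℝ =>
        ((H + M + 1 - A) / 2 + A) * (1 - (H + M + 1 - A) / 2)
            * ((H + M + 1 - A) / 2 - M) - q * ((H + M + 1 - A) / 2)) Q
      = -((H + M + 1 - A) / 2) ∧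
    deriv (fun _ : ℝ => (H + M + 1 - A) / 2 - (H + M + 1 - A) / 2) Q = 0 ∧
    (-(S * (H + M + 1 + A) / (Q * (H + M + 1 - A)))) * (-((H + M + 1 - A) / 2))
        + 1 * 0
      = S * (H + M + 1 + A) / (2 * Q) ∧
    S * (H + M + 1 + A) / (2 * Q) ≠ 0 := by
  have hQpos : 0 < Q := by
    rw [hQ]
    exact div_pos (mul_pos (mul_pos (by linarith) (by linarith)) (by linarith)) hH
  have hD : (H + M + 1 - A) ≠ 0 := by
    intro h
    rw [h] at hΔ
    have : 4 * A * M / H > 0 :=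
      div_pos (by nlinarith) hH
    simp at hΔ
    linarith
  refine ⟨?_, ?_, ?_, ?_⟩
  · have : (fun q : ℝ =>
        ((H + M + 1 - A) / 2 + A) * (1 - (H + M + 1 - A) / 2)
            * ((H + M + 1 - A) / 2 - M) - q * ((H + M + 1 - A) / 2))
        = fun q : ℝ => -((H + M + 1 - A) / 2) * q
            + ((H + M + 1 - A) / 2 + A) * (1 - (H + M + 1 - A) / 2)
            * ((H + M + 1 - A) / 2 - M) := by
      funext q; ring
    rw [this, deriv_add_const, deriv_const_mul _ differentiable_id.differentiableAt,
      deriv_id'']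
    ring
  · simp
  · field_simp
    ring
  · exact ne_of_gt (div_pos (mul_pos hS (by linarith)) (by linarith))
end
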